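/- arXiv:1510.00045 — 7 statements merged into one kernel-verified Lean document; each statement's English description precedes it below -/
import Mathlib

section
/- Fix constants d₁, d₂ > 0. Then ∫_{d₁}^{λ−d₂} ∫_{d₂}^{λ−u₁} (λ−u₁−u₂)/(u₁u₂) du₂ du₁ = λ·(log λ)² + O(λ·log λ) as λ → ∞. More precisely, there exist constants C > 0 and Λ > 0 such that for all λ ≥ Λ, |∫_{d₁}^{λ−d₂} ∫_{d₂}^{λ−u₁} (λ−u₁−u₂)/(u₁u₂) du₂ du₁ − λ(log λ)²| ≤ C·λ·log λ. -/
/-!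
Integrating in `u₂` first gives `∫_{d₂}^{t} (t - v) / v dv = t log (t / d₂) - (t - d₂)` with
`t = λ - u₁`. This lies below `λ log (λ / d₂)`, and for `u₁ ≤ λ / 2` above
`t (log (λ / (2 d₂)) - 1)`; integrating against `du₁ / u₁` then traps the double integral between
two expressions `λ (log λ - p) (log λ - q)` with constants `p, q`, each within `O(λ log λ)` of
`λ (log λ)²`.
-/

open Real MeasureTheory Set intervalIntegral

lemma intervalIntegrable_inv_of_pos {a b : ℝ} (ha : 0 < a) (hab : a ≤ b) :
    IntervalIntegrable (fun x : ℝ => x⁻¹) volume a b :=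
  intervalIntegrable_inv_iff.mpr <| .inr fun h => by
    rw [uIcc_of_le hab] at h
    exact (ha.trans_le h.1).false

noncomputable def innerMass (d t : ℝ) : ℝ := t * log (t / d) - (t - d)

lemma integral_sub_div_mul_eq {d t : ℝ} (u : ℝ) (hd : 0 < d) (hdt : d ≤ t) :
    ∫ v in d..t, (t - v) / (u * v) = innerMass d t / u := by
  have hcongr : EqOn (fun v => (t - v) / (u * v)) (fun v => (t * v⁻¹ - 1) / u) (uIcc d t) := by
    intro v hv
    rw [uIcc_of_le hdt] at hv
    have hv0 : v ≠ 0 := (hd.trans_le hv.1).ne'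
    simp only
    field_simp
  have hinv : IntervalIntegrable (fun v : ℝ => v⁻¹) volume d t :=
    intervalIntegrable_inv_of_pos hd hdt
  rw [integral_congr hcongr, intervalIntegral.integral_div,
    integral_sub (hinv.const_mul t) intervalIntegrable_const, intervalIntegral.integral_const_mul,
    integral_inv_of_pos hd (hd.trans_le hdt), intervalIntegral.integral_const, smul_eq_mul,
    mul_one, innerMass]

lemma innerMass_nonneg {d t : ℝ} (hd : 0 < d) (hdt : d ≤ t) : 0 ≤ innerMass d t := by
  have ht : 0 < t := hd.trans_le hdt
  have hlog := one_sub_inv_le_log_of_pos (div_pos ht hd)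
  rw [inv_div] at hlog
  have key : t * (1 - d / t) = t - d := by field_simp
  rw [innerMass, sub_nonneg, ← key]
  exact mul_le_mul_of_nonneg_left hlog ht.le

lemma innerMass_le {d t L : ℝ} (hd : 0 < d) (hdt : d ≤ t) (htL : t ≤ L) :
    innerMass d t ≤ L * log (L / d) := by
  have ht : 0 < t := hd.trans_le hdt
  have hlog_nonneg : 0 ≤ log (t / d) := log_nonneg ((one_le_div hd).mpr hdt)
  have hlog_mono : log (t / d) ≤ log (L / d) :=
    log_le_log (div_pos ht hd) (div_le_div_of_nonneg_right htL hd.le)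
  calc innerMass d t ≤ t * log (t / d) := by unfold innerMass; linarith
    _ ≤ L * log (L / d) := mul_le_mul htL hlog_mono hlog_nonneg (ht.le.trans htL)

lemma mul_log_sub_one_le_innerMass {d s t : ℝ} (hd : 0 < d) (hs : 0 < s) (hst : s ≤ t) :
    t * (log (s / d) - 1) ≤ innerMass d t := by
  have hlog_mono : log (s / d) ≤ log (t / d) :=
    log_le_log (div_pos hs hd) (div_le_div_of_nonneg_right hst hd.le)
  have := mul_le_mul_of_nonneg_left hlog_mono (hs.le.trans hst)
  unfold innerMass
  linarith

lemma intervalIntegrable_innerMass_div {d lam a b : ℝ} (hd : 0 < d) (ha : 0 < a) (hab : a ≤ b)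
    (hb : b < lam) :
    IntervalIntegrable (fun u => innerMass d (lam - u) / u) volume a b := by
  apply ContinuousOn.intervalIntegrable
  rw [uIcc_of_le hab]
  unfold innerMass
  have hpos : ∀ u ∈ Icc a b, 0 < u := fun u hu => ha.trans_le hu.1
  have hlt : ∀ u ∈ Icc a b, (lam - u) / d ≠ 0 := fun u hu =>
    (div_pos (by linarith [hu.2]) hd).ne'
  fun_prop (disch := intro u hu; first | exact hd.ne' | exact hlt u hu | exact (hpos u hu).ne')

lemma integral_triangle_eq {d₁ d₂ lam : ℝ} (hd₂ : 0 < d₂) (h : d₁ + d₂ ≤ lam) :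
    ∫ u₁ in d₁..(lam - d₂), ∫ u₂ in d₂..(lam - u₁), (lam - u₁ - u₂) / (u₁ * u₂)
      = ∫ u in d₁..(lam - d₂), innerMass d₂ (lam - u) / u := by
  refine integral_congr fun u hu => ?_
  rw [uIcc_of_le (by linarith)] at hu
  exact integral_sub_div_mul_eq u hd₂ (by linarith [hu.2])

lemma integral_innerMass_div_le {d₁ d₂ lam : ℝ} (hd₁ : 0 < d₁) (hd₂ : 0 < d₂)
    (h : d₁ + d₂ ≤ lam) :
    ∫ u in d₁..(lam - d₂), innerMass d₂ (lam - u) / u ≤ lam * log (lam / d₂) * log (lam / d₁) := by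
  have hle : d₁ ≤ lam - d₂ := by linarith
  have hmono := integral_mono_on hle
    (intervalIntegrable_innerMass_div (lam := lam) hd₂ hd₁ hle (by linarith))
    ((intervalIntegrable_inv_of_pos hd₁ hle).const_mul (lam * log (lam / d₂)))
    fun u hu => by
      rw [div_eq_mul_inv]
      exact mul_le_mul_of_nonneg_right (innerMass_le hd₂ (by linarith [hu.2]) (by linarith [hu.1]))
        (inv_nonneg.mpr (by linarith [hu.1]))
  rw [intervalIntegral.integral_const_mul, integral_inv_of_pos hd₁ (by linarith)] at hmono
  have hlam : 0 ≤ lam * log (lam / d₂) :=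
    mul_nonneg (by linarith) (log_nonneg ((one_le_div hd₂).mpr (by linarith)))
  refine hmono.trans (mul_le_mul_of_nonneg_left ?_ hlam)
  exact log_le_log (div_pos (by linarith) hd₁) (div_le_div_of_nonneg_right (by linarith) hd₁.le)

lemma le_integral_innerMass_div {d₁ d₂ lam : ℝ} (hd₁ : 0 < d₁) (hd₂ : 0 < d₂)
    (h : 2 * (d₁ + d₂) ≤ lam) (hlog : 1 ≤ log (lam / (2 * d₂))) :
    lam * (log (lam / (2 * d₂)) - 1) * (log (lam / (2 * d₁)) - 1 / 2)
      ≤ ∫ u in d₁..(lam - d₂), innerMass d₂ (lam - u) / u := by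
  set c := log (lam / (2 * d₂)) - 1
  have hc0 : 0 ≤ c := by linarith
  have hfirst : d₁ ≤ lam / 2 := by linarith
  have hsecond : lam / 2 ≤ lam - d₂ := by linarith
  have hinv := intervalIntegrable_inv_of_pos hd₁ hfirst
  have hmono := integral_mono_on (f := fun u => c * lam * u⁻¹ - c) hfirst
    ((hinv.const_mul (c * lam)).sub intervalIntegrable_const)
    (intervalIntegrable_innerMass_div (lam := lam) hd₂ hd₁ hfirst (by linarith))
    fun u hu => by
      have hu0 : 0 < u := hd₁.trans_le hu.1
      have := mul_log_sub_one_le_innerMass (t := lam - u) hd₂ (by linarith : 0 < lam / 2)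
        (by linarith [hu.2])
      rw [div_div] at this
      rw [le_div_iff₀ hu0]
      field_simp
      linarith
  rw [integral_sub (hinv.const_mul _) intervalIntegrable_const,
    intervalIntegral.integral_const_mul,
    integral_inv_of_pos hd₁ (by linarith), intervalIntegral.integral_const, smul_eq_mul] at hmono
  have hsplit := integral_add_adjacent_intervals
    (intervalIntegrable_innerMass_div (lam := lam) hd₂ hd₁ hfirst (by linarith))
    (intervalIntegrable_innerMass_div (lam := lam) hd₂ (by linarith) hsecond (by linarith))
  have htail : 0 ≤ ∫ u in (lam / 2)..(lam - d₂), innerMass d₂ (lam - u) / u :=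
    integral_nonneg hsecond fun u hu =>
      div_nonneg (innerMass_nonneg hd₂ (by linarith [hu.2])) (by linarith [hu.1])
  have hlog_split : log ((lam / 2) / d₁) = log (lam / (2 * d₁)) := by rw [div_div]
  rw [hlog_split] at hmono
  linarith [mul_nonneg hc0 hd₁.le]

lemma abs_mul_sub_mul_sub_sub_sq_le {ℓ : ℝ} (p q : ℝ) (hℓ : 1 ≤ ℓ) :
    |(ℓ - p) * (ℓ - q) - ℓ ^ 2| ≤ (1 + |p|) * (1 + |q|) * ℓ := by
  have hexpand : (ℓ - p) * (ℓ - q) - ℓ ^ 2 = -(p + q) * ℓ + p * q := by ring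
  rw [hexpand]
  calc |-(p + q) * ℓ + p * q| ≤ (|p| + |q|) * ℓ + |p| * |q| := by
        refine (abs_add_le _ _).trans (add_le_add ?_ (abs_mul p q).le)
        rw [abs_mul, abs_neg, abs_of_nonneg (by linarith : (0 : ℝ) ≤ ℓ)]
        exact mul_le_mul_of_nonneg_right (abs_add_le p q) (by linarith)
    _ ≤ (1 + |p|) * (1 + |q|) * ℓ := by
        nlinarith [abs_nonneg p, abs_nonneg q, mul_nonneg (abs_nonneg p) (abs_nonneg q)]

lemma abs_sub_mul_sq_le_of_between {I lam ℓ p q r s : ℝ} (hlam : 0 ≤ lam) (hℓ : 1 ≤ ℓ)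
    (hlower : lam * (ℓ - p) * (ℓ - q) ≤ I) (hupper : I ≤ lam * (ℓ - r) * (ℓ - s)) :
    |I - lam * ℓ ^ 2| ≤ ((1 + |p|) * (1 + |q|) + (1 + |r|) * (1 + |s|)) * lam * ℓ := by
  have hbetween := abs_le_max_abs_abs (sub_le_sub_right hlower (lam * ℓ ^ 2))
    (sub_le_sub_right hupper (lam * ℓ ^ 2))
  have hfactor : ∀ a b : ℝ, |lam * (ℓ - a) * (ℓ - b) - lam * ℓ ^ 2|
      = lam * |(ℓ - a) * (ℓ - b) - ℓ ^ 2| := fun a b => by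
    rw [← abs_of_nonneg hlam, ← abs_mul, abs_of_nonneg hlam]; ring_nf
  rw [hfactor, hfactor] at hbetween
  have hpq := mul_le_mul_of_nonneg_left (abs_mul_sub_mul_sub_sub_sq_le p q hℓ) hlam
  have hrs := mul_le_mul_of_nonneg_left (abs_mul_sub_mul_sub_sub_sq_le r s hℓ) hlam
  have hℓlam : 0 ≤ lam * ℓ := mul_nonneg hlam (by linarith)
  have hpq_nonneg : 0 ≤ (1 + |p|) * (1 + |q|) := by positivity
  have hrs_nonneg : 0 ≤ (1 + |r|) * (1 + |s|) := by positivity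
  refine hbetween.trans (max_le ?_ ?_)
  · linarith [mul_nonneg hrs_nonneg hℓlam]
  · linarith [mul_nonneg hpq_nonneg hℓlam]

theorem double_integral_asymptotics (d₁ d₂ : ℝ) (hd₁ : 0 < d₁) (hd₂ : 0 < d₂) :
    ∃ C Λ : ℝ, 0 < C ∧ 0 < Λ ∧ ∀ lam : ℝ, Λ ≤ lam →
      |(∫ u₁ in d₁..(lam - d₂), ∫ u₂ in d₂..(lam - u₁),
          (lam - u₁ - u₂) / (u₁ * u₂)) - lam * (Real.log lam)^2|
        ≤ C * lam * Real.log lam := by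
  set p := log (2 * d₂) + 1
  set q := log (2 * d₁) + 1 / 2
  refine ⟨(1 + |p|) * (1 + |q|) + (1 + |log d₂|) * (1 + |log d₁|),
    max (2 * (d₁ + d₂)) (exp (1 + |p|)), by positivity,
    lt_max_of_lt_left (by linarith), fun lam hlam => ?_⟩
  have hlam_large : 2 * (d₁ + d₂) ≤ lam := le_of_max_le_left hlam
  have hlam_pos : 0 < lam := by linarith
  have hlog_large : 1 + |p| ≤ log lam :=
    (le_log_iff_exp_le hlam_pos).mpr (le_of_max_le_right hlam)
  have hlog_div : ∀ {x : ℝ}, 0 < x → log (lam / x) = log lam - log x := fun hx =>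
    log_div hlam_pos.ne' hx.ne'
  have hlower := le_integral_innerMass_div hd₁ hd₂ hlam_large
    (by rw [hlog_div (by positivity)]; linarith [le_abs_self p])
  have hupper := integral_innerMass_div_le (lam := lam) hd₁ hd₂ (by linarith)
  rw [hlog_div (by positivity), hlog_div (by positivity)] at hlower
  rw [hlog_div hd₁, hlog_div hd₂] at hupper
  rw [integral_triangle_eq hd₂ (by linarith)]
  exact abs_sub_mul_sq_le_of_between hlam_pos.le (by linarith [abs_nonneg p])
    (by linear_combination hlower) hupper
end

section
/- Let b > 0. Then ∫₀^∞ ∫₀^∞ (λ − e^{2πbk} − e^{2πby})₊ dk dy = λ(log λ)²/(2πb)² + O(λ log λ) as λ → ∞. -/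
/-!
Write `a = 2πb`. The integrand vanishes as soon as `k` or `y` exceeds `log λ / a` and is at most
`λ`, so the double integral is at most `λ (log λ / a)²`. For the lower bound drop the positive part
on the square `(0, T]²` with `T = log (λ/2) / a`: the integral of `λ - e^{ak} - e^{ay}` over it is
`T² λ - 2T (e^{aT} - 1)/a ≥ T² λ - T λ / a`, and `(log λ - log 2)² = (log λ)² - O(log λ)`.
-/

open Real MeasureTheory Set

theorem integral_exp_mul {a b c : ℝ} (hc : c ≠ 0) :
    ∫ x in a..b, exp (c * x) = (exp (c * b) - exp (c * a)) / c := by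
  rw [intervalIntegral.integral_comp_mul_left (fun x => exp x) hc, integral_exp, smul_eq_mul,
    inv_mul_eq_div]

theorem integral_Ioc_sub_mul_exp {a T : ℝ} (ha : a ≠ 0) (hT : 0 ≤ T) (c d : ℝ) :
    ∫ x in Ioc 0 T, (c - d * exp (a * x)) = T * c - d * ((exp (a * T) - 1) / a) := by
  have hexp : IntervalIntegrable (fun x => exp (a * x)) volume 0 T :=
    (by fun_prop : Continuous fun x => exp (a * x)).intervalIntegrable _ _
  rw [← intervalIntegral.integral_of_le hT,
    intervalIntegral.integral_sub intervalIntegrable_const (hexp.const_mul d),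
    intervalIntegral.integral_const, intervalIntegral.integral_const_mul, integral_exp_mul ha,
    mul_zero, exp_zero, smul_eq_mul, sub_zero]

theorem setIntegral_Ioi_le_of_norm_le_of_eq_zero {f : ℝ → ℝ} {M s T : ℝ} (hsT : s ≤ T)
    (hM : ∀ x, ‖f x‖ ≤ M) (hf : ∀ x, T ≤ x → f x = 0) :
    ∫ x in Ioi s, f x ≤ M * (T - s) := by
  rw [setIntegral_eq_of_subset_of_forall_sdiff_eq_zero measurableSet_Ioi Ioc_subset_Ioi_self
    fun x hx => hf x (not_le.1 fun h => hx.2 ⟨hx.1, h⟩).le]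
  calc ∫ x in Ioc s T, f x ≤ ‖∫ x in Ioc s T, f x‖ := le_norm_self _
    _ ≤ M * volume.real (Ioc s T) :=
      norm_setIntegral_le_of_norm_le_const measure_Ioc_lt_top fun x _ => hM x
    _ = M * (T - s) := by rw [Real.volume_real_Ioc_of_le hsT]

theorem integrableOn_Ioi_of_norm_le_of_eq_zero {f : ℝ → ℝ} {M s T : ℝ}
    (hmeas : AEStronglyMeasurable f volume) (hM : ∀ x, ‖f x‖ ≤ M) (hf : ∀ x, T ≤ x → f x = 0) :
    IntegrableOn f (Ioi s) :=
  (Measure.integrableOn_of_bounded measure_Ioc_lt_top.ne hmeas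
    (ae_of_all _ hM)).of_forall_sdiff_eq_zero measurableSet_Ioi
    fun x hx => hf x (not_le.1 fun h => hx.2 ⟨hx.1, h⟩).le

theorem setIntegral_Ioc_le_setIntegral_Ioi {f g : ℝ → ℝ} {s T : ℝ} (hf : IntegrableOn f (Ioc s T))
    (hg : IntegrableOn g (Ioi s)) (hg0 : ∀ x, 0 ≤ g x) (hfg : ∀ x ∈ Ioc s T, f x ≤ g x) :
    ∫ x in Ioc s T, f x ≤ ∫ x in Ioi s, g x :=
  (setIntegral_mono_on hf (hg.mono_set Ioc_subset_Ioi_self) measurableSet_Ioc hfg).trans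
    (setIntegral_mono_set hg (ae_of_all _ hg0) Ioc_subset_Ioi_self.eventuallyLE)

noncomputable def phaseIntegrand (a lam y k : ℝ) : ℝ := max (lam - exp (a * k) - exp (a * y)) 0

section phaseIntegrand

variable {a lam : ℝ}

theorem phaseIntegrand_comm (y k : ℝ) : phaseIntegrand a lam y k = phaseIntegrand a lam k y := by
  rw [phaseIntegrand, phaseIntegrand, sub_right_comm]

theorem phaseIntegrand_nonneg (y k : ℝ) : 0 ≤ phaseIntegrand a lam y k := le_max_right _ _

theorem sub_exp_sub_exp_le_phaseIntegrand (y k : ℝ) :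
    lam - exp (a * k) - exp (a * y) ≤ phaseIntegrand a lam y k := le_max_left _ _

theorem norm_phaseIntegrand_le (hlam : 0 ≤ lam) (y k : ℝ) : ‖phaseIntegrand a lam y k‖ ≤ lam := by
  rw [Real.norm_of_nonneg (phaseIntegrand_nonneg y k)]
  exact max_le (by linarith [exp_pos (a * k), exp_pos (a * y)]) hlam

theorem phaseIntegrand_eq_zero (ha : 0 < a) (hlam : 0 < lam) (y : ℝ) {k : ℝ}
    (hk : log lam / a ≤ k) : phaseIntegrand a lam y k = 0 := by
  have hexp : lam ≤ exp (a * k) := by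
    rw [div_le_iff₀' ha] at hk
    simpa [exp_log hlam] using exp_le_exp.2 hk
  exact max_eq_right (by linarith [exp_pos (a * y)])

theorem continuous_phaseIntegrand : Continuous (Function.uncurry (phaseIntegrand a lam)) :=
  (by fun_prop : Continuous fun p : ℝ × ℝ => lam - exp (a * p.2) - exp (a * p.1)).max
    continuous_const

theorem integrableOn_phaseIntegrand (ha : 0 < a) (hlam : 0 < lam) (y : ℝ) :
    IntegrableOn (phaseIntegrand a lam y) (Ioi 0) :=
  integrableOn_Ioi_of_norm_le_of_eq_zero
    (continuous_phaseIntegrand.comp (Continuous.prodMk_right y)).aestronglyMeasurable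
    (norm_phaseIntegrand_le hlam.le y) fun _ => phaseIntegrand_eq_zero ha hlam y

theorem integral_phaseIntegrand_le (ha : 0 < a) (hlam : 1 ≤ lam) (y : ℝ) :
    ∫ k in Ioi 0, phaseIntegrand a lam y k ≤ lam * (log lam / a) := by
  simpa using setIntegral_Ioi_le_of_norm_le_of_eq_zero (div_nonneg (log_nonneg hlam) ha.le)
    (norm_phaseIntegrand_le (by linarith) y) fun _ => phaseIntegrand_eq_zero ha (by linarith) y

theorem integral_phaseIntegrand_eq_zero (ha : 0 < a) (hlam : 0 < lam) {y : ℝ}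
    (hy : log lam / a ≤ y) : ∫ k in Ioi 0, phaseIntegrand a lam y k = 0 := by
  simp_rw [phaseIntegrand_comm y, phaseIntegrand_eq_zero ha hlam _ hy, integral_zero]

theorem le_integral_phaseIntegrand (ha : 0 < a) (hlam : 0 < lam) {T : ℝ} (hT : 0 ≤ T) (y : ℝ) :
    T * (lam - exp (a * y)) - (exp (a * T) - 1) / a ≤ ∫ k in Ioi 0, phaseIntegrand a lam y k := by
  calc T * (lam - exp (a * y)) - (exp (a * T) - 1) / a
      = ∫ k in Ioc 0 T, (lam - exp (a * y) - 1 * exp (a * k)) := by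
        rw [integral_Ioc_sub_mul_exp ha.ne' hT, one_mul]
    _ ≤ ∫ k in Ioi 0, phaseIntegrand a lam y k :=
      setIntegral_Ioc_le_setIntegral_Ioi (Continuous.integrableOn_Ioc (by fun_prop))
        (integrableOn_phaseIntegrand ha hlam y) (phaseIntegrand_nonneg y) fun k _ => by
          linarith [sub_exp_sub_exp_le_phaseIntegrand (a := a) (lam := lam) y k]

theorem norm_integral_phaseIntegrand_le (ha : 0 < a) (hlam : 1 ≤ lam) (y : ℝ) :
    ‖∫ k in Ioi 0, phaseIntegrand a lam y k‖ ≤ lam * (log lam / a) := by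
  rw [Real.norm_of_nonneg
    (setIntegral_nonneg measurableSet_Ioi fun k _ => phaseIntegrand_nonneg y k)]
  exact integral_phaseIntegrand_le ha hlam y

theorem integrableOn_integral_phaseIntegrand (ha : 0 < a) (hlam : 1 ≤ lam) :
    IntegrableOn (fun y => ∫ k in Ioi 0, phaseIntegrand a lam y k) (Ioi 0) :=
  integrableOn_Ioi_of_norm_le_of_eq_zero
    (continuous_phaseIntegrand.stronglyMeasurable.integral_prod_right
      (ν := volume.restrict (Ioi 0))).aestronglyMeasurable
    (norm_integral_phaseIntegrand_le ha hlam)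
    fun _ => integral_phaseIntegrand_eq_zero ha (by linarith)

theorem integral_integral_phaseIntegrand_le (ha : 0 < a) (hlam : 1 ≤ lam) :
    ∫ y in Ioi 0, ∫ k in Ioi 0, phaseIntegrand a lam y k ≤ lam * log lam ^ 2 / a ^ 2 := by
  calc ∫ y in Ioi 0, ∫ k in Ioi 0, phaseIntegrand a lam y k
      ≤ lam * (log lam / a) * (log lam / a - 0) :=
        setIntegral_Ioi_le_of_norm_le_of_eq_zero (div_nonneg (log_nonneg hlam) ha.le)
          (norm_integral_phaseIntegrand_le ha hlam)
          fun _ => integral_phaseIntegrand_eq_zero ha (by linarith)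
    _ = lam * log lam ^ 2 / a ^ 2 := by ring

theorem le_integral_integral_phaseIntegrand (ha : 0 < a) (hlam : 1 ≤ lam) {T : ℝ} (hT : 0 ≤ T) :
    T ^ 2 * lam - 2 * T * ((exp (a * T) - 1) / a) ≤
      ∫ y in Ioi 0, ∫ k in Ioi 0, phaseIntegrand a lam y k := by
  calc T ^ 2 * lam - 2 * T * ((exp (a * T) - 1) / a)
      = ∫ y in Ioc 0 T, ((T * lam - (exp (a * T) - 1) / a) - T * exp (a * y)) := by
        rw [integral_Ioc_sub_mul_exp ha.ne' hT]; ring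
    _ ≤ ∫ y in Ioi 0, ∫ k in Ioi 0, phaseIntegrand a lam y k :=
      setIntegral_Ioc_le_setIntegral_Ioi (Continuous.integrableOn_Ioc (by fun_prop))
        (integrableOn_integral_phaseIntegrand ha hlam)
        (fun y => setIntegral_nonneg measurableSet_Ioi fun k _ => phaseIntegrand_nonneg y k)
        fun y _ => (le_integral_phaseIntegrand ha (by linarith) hT y).trans_eq' (by ring)

theorem integral_integral_phaseIntegrand_ge (ha : 0 < a) (hlam : 2 ≤ lam) :
    lam * log lam ^ 2 / a ^ 2 - 3 / a ^ 2 * lam * log lam ≤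
      ∫ y in Ioi 0, ∫ k in Ioi 0, phaseIntegrand a lam y k := by
  set L := log lam
  have hL2 : log 2 ≤ L := log_le_log two_pos hlam
  have hlog2 : log 2 < 1 := by linarith [log_two_lt_d9]
  have hlog2_pos : 0 < log 2 := log_pos one_lt_two
  have hT : 0 ≤ (L - log 2) / a := div_nonneg (by linarith) ha.le
  have hexp : exp (a * ((L - log 2) / a)) = lam / 2 := by
    rw [mul_div_cancel₀ _ ha.ne', ← log_div (by linarith) two_ne_zero, exp_log (by linarith)]
  refine le_trans ?_ (le_integral_integral_phaseIntegrand ha (by linarith) hT)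
  rw [hexp]
  calc lam * L ^ 2 / a ^ 2 - 3 / a ^ 2 * lam * L = (lam * L ^ 2 - 3 * lam * L) / a ^ 2 := by ring
    _ ≤ (lam * (L - log 2) ^ 2 - lam * (L - log 2) + 2 * (L - log 2)) / a ^ 2 := by
      gcongr
      nlinarith [mul_nonneg (mul_nonneg (by linarith : 0 ≤ lam) (by linarith : 0 ≤ L))
        (by linarith : 0 ≤ 1 - log 2), mul_nonneg (by linarith : 0 ≤ lam) (sq_nonneg (log 2)),
        mul_pos (by linarith : 0 < lam) hlog2_pos]
    _ = ((L - log 2) / a) ^ 2 * lam - 2 * ((L - log 2) / a) * ((lam / 2 - 1) / a) := by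
      field_simp; ring

end phaseIntegrand

theorem phase_space_asymptotics (b : ℝ) (hb : 0 < b) :
    ∃ C Λ : ℝ, 0 < C ∧ 0 < Λ ∧ ∀ lam : ℝ, Λ ≤ lam →
      |(∫ y in Set.Ioi (0:ℝ), ∫ k in Set.Ioi (0:ℝ),
          max (lam - Real.exp (2 * π * b * k) - Real.exp (2 * π * b * y)) 0)
        - lam * (Real.log lam)^2 / (2 * π * b)^2|
      ≤ C * lam * Real.log lam := by
  have ha : 0 < 2 * π * b := by positivity
  refine ⟨3 / (2 * π * b) ^ 2, 2, by positivity, two_pos, fun lam hlam => ?_⟩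
  have hupper := integral_integral_phaseIntegrand_le ha (by linarith : 1 ≤ lam)
  have hlower := integral_integral_phaseIntegrand_ge ha hlam
  have herror : 0 ≤ 3 / (2 * π * b) ^ 2 * lam * log lam := by
    have := log_nonneg (by linarith : 1 ≤ lam)
    positivity
  unfold phaseIntegrand at hupper hlower
  rw [abs_le]
  constructor <;> linarith
end

section
/- Let b > 0 and m, n positive integers, and let d₃ > 0 be a constant. Then the integral ∫₀^∞ ∫_{−∞}^0 (λ − d₃·e^{2πb(mk−ny)})₊ dy dk equals (1/(mn(2πb)²))·∫_{d₃}^{λ} ∫_{1}^{λ/u₁} (λ − u₁u₂)/(u₁u₂) du₂ du₁ for λ ≥ d₃, and this equals λ(log λ)²/(2mn(2πb)²) + O(λ log λ) as λ → ∞. -/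
/-!
Substituting `s = 2πbm·k`, `t = -2πbn·y` turns the left-hand side into `((2πb)² m n)⁻¹` times
`∫∫_{s,t>0} (λ - d₃ e^{s+t})₊`. With `L = log (λ/d₃)` the positive part is supported on `s + t ≤ L`,
and integrating first in `t` and then in `s` gives `λL²/2 - λL + λ - d₃`. The iterated integral on
the right evaluates to the same expression, and expanding `L = log λ - log d₃` leaves an error
`O(λ log λ)` against `λ (log λ)²/2`.
-/

open Real MeasureTheory Set

lemma mul_exp_le_iff_le_log_div {c lam t : ℝ} (hc : 0 < c) (hlam : 0 < lam) :
    c * exp t ≤ lam ↔ t ≤ log (lam / c) := by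
  rw [le_log_iff_exp_le (div_pos hlam hc), le_div_iff₀ hc, mul_comm]

lemma setIntegral_Ioi_eq_intervalIntegral {f g : ℝ → ℝ} {T : ℝ} (hT : 0 ≤ T)
    (hfg : ∀ t ∈ Ioc 0 T, g t = f t) (hg : ∀ t, T < t → g t = 0) :
    ∫ t in Ioi 0, g t = ∫ t in 0..T, f t := by
  have h_ind : EqOn g ((Iic T).indicator f) (Ioi 0) := by
    intro t ht
    by_cases htT : t ≤ T
    · rw [indicator_of_mem (mem_Iic.mpr htT), hfg t ⟨ht, htT⟩]
    · rw [indicator_of_notMem (notMem_Iic.mpr (not_le.mp htT)), hg t (not_le.mp htT)]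
  rw [setIntegral_congr_fun measurableSet_Ioi h_ind, setIntegral_indicator measurableSet_Iic,
    Ioi_inter_Iic, intervalIntegral.integral_of_le hT]

lemma integral_Ioi_max_sub_mul_exp {c : ℝ} (hc : 0 < c) (lam : ℝ) :
    ∫ t in Ioi 0, max (lam - c * exp t) 0
      = if c ≤ lam then lam * log (lam / c) - lam + c else 0 := by
  split_ifs with hcl
  · have hlam : 0 < lam := hc.trans_le hcl
    have hT : 0 ≤ log (lam / c) := log_nonneg ((one_le_div hc).mpr hcl)
    rw [setIntegral_Ioi_eq_intervalIntegral (f := fun t => lam - c * exp t) hT]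
    · simp only [intervalIntegrable_const, intervalIntegral.intervalIntegrable_exp,
        IntervalIntegrable.const_mul, intervalIntegral.integral_sub,
        intervalIntegral.integral_const, intervalIntegral.integral_const_mul, integral_exp,
        exp_log (div_pos hlam hc), exp_zero, smul_eq_mul]
      field_simp
      ring
    · intro t ht
      exact max_eq_left (sub_nonneg.mpr ((mul_exp_le_iff_le_log_div hc hlam).mpr ht.2))
    · intro t ht
      exact max_eq_right (sub_nonpos.mpr (not_le.mp
        (mt (mul_exp_le_iff_le_log_div hc hlam).mp (not_le.mpr ht))).le)
  · refine (setIntegral_congr_fun measurableSet_Ioi fun t ht => ?_).trans (integral_zero _ _)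
    have : c ≤ c * exp t := le_mul_of_one_le_right hc.le (one_le_exp ht.le)
    exact max_eq_right (by linarith [not_le.mp hcl])

lemma integral_Ioi_integral_Ioi_max_sub_mul_exp_add {d lam : ℝ} (hd : 0 < d) (hdl : d ≤ lam) :
    ∫ s in Ioi 0, ∫ t in Ioi 0, max (lam - d * exp (s + t)) 0
      = lam * log (lam / d) ^ 2 / 2 - lam * log (lam / d) + lam - d := by
  have hlam : 0 < lam := hd.trans_le hdl
  set L := log (lam / d)
  have hL : 0 ≤ L := log_nonneg ((one_le_div hd).mpr hdl)
  have h_inner : ∀ s, ∫ t in Ioi 0, max (lam - d * exp (s + t)) 0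
      = if d * exp s ≤ lam then lam * log (lam / (d * exp s)) - lam + d * exp s else 0 := by
    intro s
    simpa only [Real.exp_add, mul_assoc] using
      integral_Ioi_max_sub_mul_exp (c := d * exp s) (by positivity) lam
  simp_rw [h_inner]
  rw [setIntegral_Ioi_eq_intervalIntegral (f := fun s => lam * (L - s) - lam + d * exp s) hL]
  · have hii : ∀ f : ℝ → ℝ, Continuous f → IntervalIntegrable f volume 0 L :=
      fun f hf => hf.intervalIntegrable _ _
    rw [intervalIntegral.integral_add (hii _ (by fun_prop)) (hii _ (by fun_prop)),
      intervalIntegral.integral_sub (hii _ (by fun_prop)) (hii _ (by fun_prop)),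
      intervalIntegral.integral_const_mul,
      intervalIntegral.integral_sub (hii _ (by fun_prop)) (hii _ (by fun_prop))]
    have hexpL : exp L = lam / d := exp_log (div_pos hlam hd)
    simp only [intervalIntegral.integral_const, intervalIntegral.integral_const_mul, integral_id,
      integral_exp, hexpL, exp_zero, smul_eq_mul]
    field_simp
    ring
  · intro s hs
    rw [if_pos ((mul_exp_le_iff_le_log_div hd hlam).mpr hs.2), ← div_div,
      log_div (by positivity) (exp_pos s).ne', log_exp]
  · intro s hs
    exact if_neg (mt (mul_exp_le_iff_le_log_div hd hlam).mp (not_le.mpr hs))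

lemma integral_Iio_comp_sub_mul {q : ℝ} (hq : 0 < q) (F : ℝ → ℝ) (a : ℝ) :
    ∫ y in Iio 0, F (a - q * y) = q⁻¹ * ∫ t in Ioi 0, F (a + t) := by
  have h := integral_comp_neg_Iic 0 (fun y => F (a + q * y))
  simp only [mul_neg, ← sub_eq_add_neg, neg_zero] at h
  rw [← integral_Iic_eq_integral_Iio, h, integral_comp_mul_left_Ioi (fun t => F (a + t)) 0 hq,
    mul_zero, smul_eq_mul]

lemma integral_Ioi_integral_Iio_comp_mul_sub_mul {p q : ℝ} (hp : 0 < p) (hq : 0 < q)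
    (F : ℝ → ℝ) :
    ∫ k in Ioi 0, ∫ y in Iio 0, F (p * k - q * y)
      = (p * q)⁻¹ * ∫ s in Ioi 0, ∫ t in Ioi 0, F (s + t) := by
  simp_rw [integral_Iio_comp_sub_mul hq]
  rw [integral_const_mul, integral_comp_mul_left_Ioi (fun s => ∫ t in Ioi 0, F (s + t)) 0 hp,
    mul_zero, smul_eq_mul, mul_inv]
  ring

lemma integral_sub_mul_div_mul {u lam : ℝ} (hu : 0 < u) (hul : u ≤ lam) :
    ∫ v in (1:ℝ)..(lam / u), (lam - u * v) / (u * v) = lam / u * log (lam / u) - lam / u + 1 := by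
  have hr : 1 ≤ lam / u := (one_le_div hu).mpr hul
  have h_eq : EqOn (fun v => (lam - u * v) / (u * v)) (fun v => lam / u * v⁻¹ - 1)
      (uIcc 1 (lam / u)) := by
    intro v hv
    rw [uIcc_of_le hr] at hv
    have : 0 < v := zero_lt_one.trans_le hv.1
    field_simp
  have h_inv : IntervalIntegrable (fun v : ℝ => v⁻¹) volume 1 (lam / u) := by
    refine intervalIntegral.intervalIntegrable_inv (fun v hv => ?_) continuousOn_id
    rw [uIcc_of_le hr] at hv
    exact (zero_lt_one.trans_le hv.1).ne'
  rw [intervalIntegral.integral_congr h_eq, intervalIntegral.integral_sub (h_inv.const_mul _)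
    intervalIntegrable_const, intervalIntegral.integral_const_mul,
    integral_inv_of_pos one_pos (by linarith)]
  simp only [div_one, intervalIntegral.integral_const, smul_eq_mul, mul_one]
  ring

lemma integral_div_mul_log_div {d lam : ℝ} (hd : 0 < d) (hdl : d ≤ lam) :
    ∫ u in d..lam, (lam / u * log (lam / u) - lam / u + 1)
      = lam * log (lam / d) ^ 2 / 2 - lam * log (lam / d) + lam - d := by
  have hlam : 0 < lam := hd.trans_le hdl
  have hpos : ∀ u ∈ uIcc d lam, 0 < u := fun u hu => by
    rw [uIcc_of_le hdl] at hu; exact hd.trans_le hu.1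
  have h_deriv : ∀ u ∈ uIcc d lam, HasDerivAt
      (fun u => -(lam * (log lam - log u) ^ 2 / 2) + (lam * (log lam - log u) + u))
      (lam / u * log (lam / u) - lam / u + 1) u := by
    intro u hu
    have hℓ := (hasDerivAt_log (hpos u hu).ne').const_sub (log lam)
    refine ((((hℓ.pow 2).const_mul lam).div_const 2).neg.add
      ((hℓ.const_mul lam).add (hasDerivAt_id u))).congr_deriv ?_
    rw [log_div hlam.ne' (hpos u hu).ne']
    field_simp
    ring
  have h_cont : ContinuousOn (fun u => lam / u * log (lam / u) - lam / u + 1) (uIcc d lam) := by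
    have : ∀ u ∈ uIcc d lam, u ≠ 0 := fun u hu => (hpos u hu).ne'
    fun_prop (disch := first | assumption | exact fun u hu => (div_pos hlam (hpos u hu)).ne')
  rw [intervalIntegral.integral_eq_sub_of_hasDerivAt h_deriv h_cont.intervalIntegrable,
    log_div hlam.ne' hd.ne', sub_self]
  ring

lemma integral_integral_sub_mul_div_mul {d lam : ℝ} (hd : 0 < d) (hdl : d ≤ lam) :
    ∫ u₁ in d..lam, ∫ u₂ in (1:ℝ)..(lam / u₁), (lam - u₁ * u₂) / (u₁ * u₂)
      = lam * log (lam / d) ^ 2 / 2 - lam * log (lam / d) + lam - d := by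
  rw [← integral_div_mul_log_div hd hdl]
  refine intervalIntegral.integral_congr fun u hu => ?_
  rw [uIcc_of_le hdl] at hu
  exact integral_sub_mul_div_mul (hd.trans_le hu.1) hu.2

lemma abs_sub_main_term_le {d lam x y : ℝ} (hd : 0 < d) (hdl : d ≤ lam) (hx : 1 ≤ x) :
    |lam * (x - y) ^ 2 / 2 - lam * (x - y) + lam - d - lam * x ^ 2 / 2|
      ≤ (2 * |y| + y ^ 2 / 2 + 3) * (lam * x) := by
  have hlam : 0 < lam := hd.trans_le hdl
  have h_lam : lam ≤ lam * x := le_mul_of_one_le_right hlam.le hx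
  have h_sq : lam * y ^ 2 / 2 ≤ lam * x * (y ^ 2 / 2) := by nlinarith [sq_nonneg y]
  have h_xy : |lam * x * y| ≤ lam * x * |y| := by
    rw [abs_mul, abs_of_pos (by positivity)]
  have h_y : |lam * y| ≤ lam * x * |y| := by
    rw [abs_mul, abs_of_pos hlam]; exact mul_le_mul_of_nonneg_right h_lam (abs_nonneg y)
  rw [abs_le]
  constructor <;> nlinarith [abs_le.mp h_xy, abs_le.mp h_y, sq_nonneg y, abs_nonneg y]

theorem mixed_term_integral (b d₃ : ℝ) (hb : 0 < b) (hd₃ : 0 < d₃)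
    (m n : ℕ) (hm : 0 < m) (hn : 0 < n) :
    (∀ lam : ℝ, d₃ ≤ lam →
      (∫ k in Set.Ioi (0:ℝ), ∫ y in Set.Iio (0:ℝ),
          max (lam - d₃ * Real.exp (2 * π * b * (m * k - n * y))) 0)
        = (1 / (m * n * (2 * π * b)^2)) *
            ∫ u₁ in d₃..lam, ∫ u₂ in (1:ℝ)..(lam / u₁), (lam - u₁ * u₂) / (u₁ * u₂)) ∧
    (∃ C Λ : ℝ, 0 < C ∧ 0 < Λ ∧ ∀ lam : ℝ, Λ ≤ lam →
      |(∫ k in Set.Ioi (0:ℝ), ∫ y in Set.Iio (0:ℝ),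
          max (lam - d₃ * Real.exp (2 * π * b * (m * k - n * y))) 0)
        - lam * (Real.log lam)^2 / (2 * m * n * (2 * π * b)^2)|
      ≤ C * lam * Real.log lam) := by
  have hE : 0 < (m * n * (2 * π * b) ^ 2 : ℝ) := by positivity
  have h_closed : ∀ lam, d₃ ≤ lam →
      ∫ k in Ioi 0, ∫ y in Iio 0, max (lam - d₃ * exp (2 * π * b * (m * k - n * y))) 0
        = (lam * log (lam / d₃) ^ 2 / 2 - lam * log (lam / d₃) + lam - d₃)
          / (m * n * (2 * π * b) ^ 2) := by
    intro lam hlam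
    have h := integral_Ioi_integral_Iio_comp_mul_sub_mul (p := 2 * π * b * m)
      (q := 2 * π * b * n) (by positivity) (by positivity) fun x => max (lam - d₃ * exp x) 0
    simp only [mul_sub, mul_assoc] at h ⊢
    rw [h, integral_Ioi_integral_Ioi_max_sub_mul_exp_add hd₃ hlam]
    field_simp
  refine ⟨fun lam hlam => ?_, ?_⟩
  · rw [h_closed lam hlam, integral_integral_sub_mul_div_mul hd₃ hlam]
    ring
  refine ⟨(2 * |log d₃| + log d₃ ^ 2 / 2 + 3) / (m * n * (2 * π * b) ^ 2), max d₃ (exp 1),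
    by positivity, by positivity, fun lam hΛ => ?_⟩
  have hd₃lam : d₃ ≤ lam := le_of_max_le_left hΛ
  have hlam : 0 < lam := hd₃.trans_le hd₃lam
  have hx : 1 ≤ log lam := (le_log_iff_exp_le hlam).mpr (le_of_max_le_right hΛ)
  calc _ = |lam * (log lam - log d₃) ^ 2 / 2 - lam * (log lam - log d₃) + lam - d₃
          - lam * log lam ^ 2 / 2| / (m * n * (2 * π * b) ^ 2) := by
        rw [h_closed lam hd₃lam, log_div hlam.ne' hd₃.ne', ← abs_of_pos hE, ← abs_div,
          abs_of_pos hE]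
        congr 1
        field_simp
    _ ≤ (2 * |log d₃| + log d₃ ^ 2 / 2 + 3) * (lam * log lam) / (m * n * (2 * π * b) ^ 2) := by
        gcongr
        exact abs_sub_main_term_le hd₃ hd₃lam hx
    _ = _ := by ring
end

section
/- Let (λ_j)_{j≥1} be a nondecreasing sequence of positive reals tending to infinity with counting function N(λ) = #{j : λ_j < λ}, and suppose Σ_{j≥1}(λ − λ_j)₊ = A·λ(log λ)² + O(λ log λ) as λ → ∞ for some constant A > 0. Then lim_{λ→∞} N(λ)/(log λ)² = A. -/
/-!
With `R l = ∑ (l - λ_j)₊` and `N l = #{j | λ_j < l}`: every summand lies in `[0, l]`, and moving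
from `l` to `l + ρ` raises the summand of each `λ_j < l` by exactly `ρ`, so
`R l ≤ l N l ≤ R (2l) - R l`.
The hypothesis gives `R l / (l (log l)²) → A`, and `log (2l) / log l → 1`, so both bounds divided by
`l (log l)²` tend to `A`.
-/

open Filter Asymptotics Real Topology

section Counting

variable {ι : Type*} (lam : ι → ℝ)

noncomputable def rieszMean (l : ℝ) : ℝ := ∑' j, max (l - lam j) 0

noncomputable def countingFunction (l : ℝ) : ℕ := Set.ncard {j | lam j < l}

variable {lam}

theorem finite_setOf_lt_of_tendsto_cofinite (h : Tendsto lam cofinite atTop) (l : ℝ) :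
    {j | lam j < l}.Finite := by
  simpa using eventually_cofinite.mp (h.eventually_ge_atTop l)

theorem rieszMean_eq_sum (h : Tendsto lam cofinite atTop) (l : ℝ) :
    rieszMean lam l = ∑ j ∈ (finite_setOf_lt_of_tendsto_cofinite h l).toFinset, (l - lam j) := by
  rw [rieszMean, tsum_eq_sum (s := (finite_setOf_lt_of_tendsto_cofinite h l).toFinset)]
  · refine Finset.sum_congr rfl fun j hj => max_eq_left ?_
    linarith [show lam j < l by simpa using hj]
  · intro j hj
    simpa using hj

theorem summable_rieszMean (h : Tendsto lam cofinite atTop) (l : ℝ) :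
    Summable fun j => max (l - lam j) 0 :=
  summable_of_hasFiniteSupport <| (finite_setOf_lt_of_tendsto_cofinite h l).subset
    fun j hj => by
      by_contra hlt
      exact hj (max_eq_right (by simpa using hlt))

theorem countingFunction_eq_card (h : Tendsto lam cofinite atTop) (l : ℝ) :
    countingFunction lam l = (finite_setOf_lt_of_tendsto_cofinite h l).toFinset.card :=
  Set.ncard_eq_toFinset_card _ _

theorem rieszMean_le_mul_countingFunction (h : Tendsto lam cofinite atTop)
    (hnonneg : ∀ j, 0 ≤ lam j) (l : ℝ) : rieszMean lam l ≤ l * countingFunction lam l := by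
  rw [rieszMean_eq_sum h, countingFunction_eq_card h, mul_comm, ← nsmul_eq_mul,
    ← Finset.sum_const]
  exact Finset.sum_le_sum fun j _ => by linarith [hnonneg j]

theorem mul_countingFunction_le_rieszMean_sub (h : Tendsto lam cofinite atTop) {ρ : ℝ}
    (hρ : 0 ≤ ρ) (l : ℝ) :
    ρ * countingFunction lam l ≤ rieszMean lam (l + ρ) - rieszMean lam l := by
  set S := (finite_setOf_lt_of_tendsto_cofinite h l).toFinset
  have hstep : ∀ j ∈ S, max (l + ρ - lam j) 0 - max (l - lam j) 0 = ρ := by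
    intro j hj
    have : lam j < l := by simpa [S] using hj
    rw [max_eq_left (by linarith), max_eq_left (by linarith)]
    ring
  calc ρ * countingFunction lam l = ∑ j ∈ S, (max (l + ρ - lam j) 0 - max (l - lam j) 0) := by
        rw [Finset.sum_congr rfl hstep, Finset.sum_const, nsmul_eq_mul, mul_comm,
          countingFunction_eq_card h]
    _ ≤ ∑' j, (max (l + ρ - lam j) 0 - max (l - lam j) 0) :=
        ((summable_rieszMean h _).sub (summable_rieszMean h l)).sum_le_tsum S fun j _ => by
          linarith [max_le_max_right 0 (by linarith : l - lam j ≤ l + ρ - lam j)]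
    _ = rieszMean lam (l + ρ) - rieszMean lam l :=
        (summable_rieszMean h _).tsum_sub (summable_rieszMean h l)

end Counting

theorem tendsto_div_mul_log_sq_of_abs_sub_le {f : ℝ → ℝ} {A C Λ : ℝ}
    (hf : ∀ l, Λ ≤ l → |f l - A * l * log l ^ 2| ≤ C * l * log l) :
    Tendsto (fun l => f l / (l * log l ^ 2)) atTop (𝓝 A) := by
  have hO : (fun l => f l - A * l * log l ^ 2) =O[atTop] fun l => l * log l := by
    refine IsBigO.of_bound C ?_
    filter_upwards [eventually_ge_atTop Λ, eventually_ge_atTop 1] with l hΛ h1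
    rw [Real.norm_eq_abs, Real.norm_of_nonneg (mul_nonneg (by linarith) (log_nonneg h1)),
      ← mul_assoc]
    exact hf l hΛ
  have ho : (fun l => l * log l) =o[atTop] fun l => l * log l ^ 2 := by
    simpa using (isBigO_refl (fun l : ℝ => l) atTop).mul_isLittleO
      ((isLittleO_pow_pow_atTop_of_lt one_lt_two).comp_tendsto tendsto_log_atTop)
  rw [← tendsto_sub_nhds_zero_iff]
  refine ((hO.trans_isLittleO ho).tendsto_div_nhds_zero).congr' ?_
  filter_upwards [eventually_gt_atTop 1] with l hl
  have : log l ≠ 0 := (log_pos hl).ne'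
  field_simp

theorem tendsto_log_mul_div_log {c : ℝ} (hc : 0 < c) :
    Tendsto (fun l => log (c * l) / log l) atTop (𝓝 1) := by
  have h := (tendsto_const_nhds (x := log c)).div_atTop tendsto_log_atTop |>.add_const 1
  rw [zero_add] at h
  refine h.congr' ?_
  filter_upwards [eventually_gt_atTop 1] with l hl
  rw [log_mul hc.ne' (by linarith), add_div, div_self (log_pos hl).ne']

theorem tendsto_sub_div_mul_log_sq {f : ℝ → ℝ} {A : ℝ}
    (hf : Tendsto (fun l => f l / (l * log l ^ 2)) atTop (𝓝 A)) :
    Tendsto (fun l => (f (2 * l) - f l) / (l * log l ^ 2)) atTop (𝓝 A) := by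
  have hf2 := hf.comp (tendsto_id.const_mul_atTop two_pos)
  have h := ((hf2.const_mul 2).mul ((tendsto_log_mul_div_log two_pos).pow 2)).sub hf
  rw [one_pow, mul_one, two_mul, add_sub_cancel_right] at h
  refine h.congr' ?_
  filter_upwards [eventually_gt_atTop 1] with l hl
  have : log l ≠ 0 := (log_pos hl).ne'
  have : log (2 * l) ≠ 0 := (log_pos (by linarith)).ne'
  simp only [Function.comp_apply, id]
  field_simp

theorem weyl_law_from_riesz_mean_general (lam : ℕ → ℝ)
    (hpos : ∀ j, 0 < lam j) (htend : Tendsto lam atTop atTop)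
    (A : ℝ)
    (hriesz : ∃ C Λ : ℝ, 0 < C ∧ 0 < Λ ∧ ∀ l : ℝ, Λ ≤ l →
      |(∑' j, max (l - lam j) 0) - A * l * (Real.log l)^2| ≤ C * l * Real.log l) :
    Tendsto (fun l : ℝ => (Set.ncard {j : ℕ | lam j < l} : ℝ) / (Real.log l)^2)
      atTop (nhds A) := by
  obtain ⟨C, Λ, -, -, hbound⟩ := hriesz
  have hcof : Tendsto lam cofinite atTop := Nat.cofinite_eq_atTop ▸ htend
  have hR := tendsto_div_mul_log_sq_of_abs_sub_le (f := rieszMean lam) hbound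
  refine tendsto_of_tendsto_of_tendsto_of_le_of_le' hR (tendsto_sub_div_mul_log_sq hR) ?_ ?_
  · filter_upwards [eventually_gt_atTop 1] with l hl
    show rieszMean lam l / (l * log l ^ 2) ≤ countingFunction lam l / log l ^ 2
    have hle := rieszMean_le_mul_countingFunction hcof (fun j => (hpos j).le) l
    have hL : 0 < log l ^ 2 := pow_pos (log_pos hl) 2
    rw [div_le_div_iff₀ (by positivity) hL]
    linarith [mul_le_mul_of_nonneg_right hle hL.le]
  · filter_upwards [eventually_gt_atTop 1] with l hl
    show countingFunction lam l / log l ^ 2 ≤ (rieszMean lam (2 * l) - rieszMean lam l) / _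
    have hle := mul_countingFunction_le_rieszMean_sub hcof (by linarith : 0 ≤ l) l
    have hL : 0 < log l ^ 2 := pow_pos (log_pos hl) 2
    rw [← two_mul] at hle
    rw [div_le_div_iff₀ hL (by positivity)]
    linarith [mul_le_mul_of_nonneg_right hle hL.le]

theorem weyl_law_from_riesz_mean (lam : ℕ → ℝ) (hmono : Monotone lam)
    (hpos : ∀ j, 0 < lam j) (htend : Tendsto lam atTop atTop)
    (A : ℝ) (hA : 0 < A)
    (hriesz : ∃ C Λ : ℝ, 0 < C ∧ 0 < Λ ∧ ∀ l : ℝ, Λ ≤ l →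
      |(∑' j, max (l - lam j) 0) - A * l * (Real.log l)^2| ≤ C * l * Real.log l) :
    Tendsto (fun l : ℝ => (Set.ncard {j : ℕ | lam j < l} : ℝ) / (Real.log l)^2)
      atTop (nhds A) :=
  weyl_law_from_riesz_mean_general lam hpos htend A hriesz
end

section
/- Let a > 0, b > 0, g(x) = (a/π)^{1/4} e^{−ax²/2}, and for k, y ∈ ℝ define e_{k,y}(x) = e^{2πikx} g(x−y). Then ∫_ℝ (e^{−2πbk} g(x−y+ib) + e^{2πbk} g(x−y−ib))·g(x−y) dx = e^{ab²/4} · 2cosh(2πbk). -/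
open Real Complex MeasureTheory

lemma gauss_aux (a : ℝ) (ha : 0 < a) (g : ℝ → ℝ)
    (hg : ∀ x, g x = (a / π) ^ ((1:ℝ)/4) * Real.exp (-a * x^2 / 2))
    (G : ℂ → ℂ)
    (hG : ∀ z : ℂ, G z = ((a / π) ^ ((1:ℝ)/4) : ℝ) * Complex.exp (-(a:ℂ) * z^2 / 2))
    (s : ℂ) :
    (fun t : ℝ => G ((t : ℂ) + s) * (g t : ℂ)) =
      (fun t : ℝ => (((a / π) ^ ((1:ℝ)/2) : ℝ) : ℂ) *
        Complex.exp ((-(a:ℂ)) * (t:ℝ)^2 + (-(a:ℂ) * s) * t + (-(a:ℂ) * s^2 / 2))) := by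
  funext t
  rw [hG, hg, Complex.ofReal_mul, Complex.ofReal_exp]
  push_cast
  rw [mul_mul_mul_comm, ← Complex.exp_add, ← Complex.ofReal_mul,
    ← Real.rpow_add (by positivity)]
  congr 1
  · norm_num
  · congr 1
    ring

lemma gauss_int (a : ℝ) (ha : 0 < a) (g : ℝ → ℝ)
    (hg : ∀ x, g x = (a / π) ^ ((1:ℝ)/4) * Real.exp (-a * x^2 / 2))
    (G : ℂ → ℂ)
    (hG : ∀ z : ℂ, G z = ((a / π) ^ ((1:ℝ)/4) : ℝ) * Complex.exp (-(a:ℂ) * z^2 / 2))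
    (s : ℂ) :
    ∫ t : ℝ, G ((t : ℂ) + s) * (g t : ℂ) = Complex.exp (-(a:ℂ) * s^2 / 4) := by
  rw [gauss_aux a ha g hg G hG s, MeasureTheory.integral_const_mul]
  have hre : (-(a:ℂ)).re < 0 := by simpa using ha
  rw [integral_cexp_quadratic hre]
  have h1 : ((π:ℂ) / -(-(a:ℂ))) = (((π / a : ℝ)) : ℂ) := by push_cast; ring
  have h2 : ((π / a : ℝ) : ℂ) ^ (1/2 : ℂ) = (((π / a) ^ ((1:ℝ)/2) : ℝ) : ℂ) := by
    rw [show (1/2 : ℂ) = (((1:ℝ)/2 : ℝ) : ℂ) by norm_num,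
      ← Complex.ofReal_cpow (by positivity)]
  rw [h1, h2, ← mul_assoc, ← Complex.ofReal_mul]
  have h3 : ((a/π:ℝ)^((1:ℝ)/2) * (π/a)^((1:ℝ)/2)) = 1 := by
    rw [← Real.mul_rpow (by positivity) (by positivity), div_mul_div_comm,
      show a * π / (π * a) = 1 by rw [mul_comm]; exact div_self (by positivity)]
    exact Real.one_rpow _
  rw [h3]
  simp only [Complex.ofReal_one, one_mul]
  congr 1
  have ha' : (a:ℂ) ≠ 0 := by exact_mod_cast ha.ne'
  field_simp
  ring

lemma gauss_integrable (a : ℝ) (ha : 0 < a) (g : ℝ → ℝ)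
    (hg : ∀ x, g x = (a / π) ^ ((1:ℝ)/4) * Real.exp (-a * x^2 / 2))
    (G : ℂ → ℂ)
    (hG : ∀ z : ℂ, G z = ((a / π) ^ ((1:ℝ)/4) : ℝ) * Complex.exp (-(a:ℂ) * z^2 / 2))
    (s : ℂ) :
    Integrable (fun t : ℝ => G ((t : ℂ) + s) * (g t : ℂ)) := by
  rw [gauss_aux a ha g hg G hG s]
  exact (integrable_cexp_quadratic' (by simpa using ha) _ _).const_mul _

theorem coherent_state_H0_form (a b : ℝ) (ha : 0 < a) (hb : 0 < b)
    (g : ℝ → ℝ) (hg : ∀ x, g x = (a / π) ^ ((1:ℝ)/4) * Real.exp (-a * x^2 / 2))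
    (G : ℂ → ℂ)
    (hG : ∀ z : ℂ, G z = ((a / π) ^ ((1:ℝ)/4) : ℝ) * Complex.exp (-(a:ℂ) * z^2 / 2))
    (k y : ℝ) :
    (∫ x : ℝ, (Real.exp (-2 * π * b * k) * G ((x : ℂ) - y + Complex.I * b)
        + Real.exp (2 * π * b * k) * G ((x : ℂ) - y - Complex.I * b)) * (g (x - y) : ℂ))
      = ((Real.exp (a * b^2 / 4) * (2 * Real.cosh (2 * π * b * k)) : ℝ) : ℂ) := by
  have key : (∫ x : ℝ, (Real.exp (-2 * π * b * k) * G ((x : ℂ) - y + Complex.I * b)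
        + Real.exp (2 * π * b * k) * G ((x : ℂ) - y - Complex.I * b)) * (g (x - y) : ℂ))
      = ∫ t : ℝ, (Real.exp (-2 * π * b * k) * G ((t : ℂ) + Complex.I * b)
        + Real.exp (2 * π * b * k) * G ((t : ℂ) + (-(Complex.I * b)))) * (g t : ℂ) := by
    rw [← MeasureTheory.integral_sub_right_eq_self
      (fun t : ℝ => (Real.exp (-2 * π * b * k) * G ((t : ℂ) + Complex.I * b)
        + Real.exp (2 * π * b * k) * G ((t : ℂ) + (-(Complex.I * b)))) * (g t : ℂ)) y]
    congr 1
    funext x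
    push_cast
    ring_nf
  rw [key]
  simp_rw [add_mul, mul_assoc]
  rw [MeasureTheory.integral_add
      ((gauss_integrable a ha g hg G hG (Complex.I * b)).const_mul _)
      ((gauss_integrable a ha g hg G hG (-(Complex.I * b))).const_mul _),
    MeasureTheory.integral_const_mul, MeasureTheory.integral_const_mul,
    gauss_int a ha g hg G hG, gauss_int a ha g hg G hG]
  have hIb : -(a:ℂ) * (Complex.I * b)^2 / 4 = ((a * b^2 / 4 : ℝ) : ℂ) := by
    push_cast
    rw [mul_pow, Complex.I_sq]
    ring
  have hIb' : -(a:ℂ) * (-(Complex.I * b))^2 / 4 = ((a * b^2 / 4 : ℝ) : ℂ) := by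
    push_cast
    rw [neg_pow, mul_pow, Complex.I_sq]
    ring
  rw [hIb, hIb', ← Complex.ofReal_exp, Real.cosh_eq]
  push_cast
  ring
end

section
/- Let m, n ≥ 1 be integers, let d₁, d₂, d₃ > 0, and define Ψ(k,y) = d₁e^{−2πbk} + d₂e^{2πby} + d₃e^{2πbmk}e^{−2πbny} for b > 0. Then there exist positive constants c₁, c₂ such that Ψ(k,y) > c₁(e^{−c₂k} + e^{c₂k} + e^{−c₂y} + e^{c₂y}) for all (k,y) ∈ ℝ². In particular Ψ(k,y) ≥ 4c₁ everywhere and Ψ(k,y) → ∞ as |k| + |y| → ∞. -/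
open Real Filter

private lemma exq1 {c a k : ℝ} (hca : c ≤ a) (hk : k ≤ 0) : -c * k ≤ -a * k := by
  nlinarith [mul_nonneg (sub_nonneg.mpr hca) (neg_nonneg.mpr hk)]

private lemma exq2 {c a M N k y : ℝ} (hN : 1 ≤ N) (ha : 0 < a)
    (hB : 2 * N * c ≤ a * M) (hy : M * k ≤ 2 * N * y) (hk : 0 ≤ k) : c * k ≤ a * y := by
  have h1 := mul_le_mul_of_nonneg_right hB hk
  have h2 := mul_le_mul_of_nonneg_left hy ha.le
  nlinarith

private lemma exq3 {c a M N k y : ℝ} (ha : 0 < a)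
    (hC : 2 * c ≤ a * M) (hy : 2 * N * y ≤ M * k) (hk : 0 ≤ k) :
    c * k ≤ a * M * k - a * N * y := by
  have h1 := mul_le_mul_of_nonneg_right hC hk
  have h2 := mul_le_mul_of_nonneg_left hy ha.le
  nlinarith

private lemma exq4 {c a M N k y : ℝ} (hM : 1 ≤ M) (ha : 0 < a)
    (hD : 2 * M * c ≤ a * N) (hk : 2 * M * k ≤ N * y) (hy : y ≤ 0) : -c * y ≤ -a * k := by
  have h1 := mul_le_mul_of_nonneg_right hD (neg_nonneg.mpr hy)
  have h2 := mul_le_mul_of_nonneg_left hk ha.le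
  nlinarith

private lemma exq5 {c a M N k y : ℝ} (ha : 0 < a)
    (hE : 2 * c ≤ a * N) (hk : N * y ≤ 2 * M * k) (hy : y ≤ 0) :
    -c * y ≤ a * M * k - a * N * y := by
  have h1 := mul_le_mul_of_nonneg_right hE (neg_nonneg.mpr hy)
  have h2 := mul_le_mul_of_nonneg_left hk ha.le
  nlinarith

set_option maxHeartbeats 1600000 in
theorem symbol_lower_bound (b : ℝ) (hb : 0 < b) (m n : ℕ) (hm : 1 ≤ m) (hn : 1 ≤ n)
    (d₁ d₂ d₃ : ℝ) (hd₁ : 0 < d₁) (hd₂ : 0 < d₂) (hd₃ : 0 < d₃)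
    (Ψ : ℝ → ℝ → ℝ)
    (hΨ : ∀ k y : ℝ, Ψ k y = d₁ * Real.exp (-2 * π * b * k) + d₂ * Real.exp (2 * π * b * y)
      + d₃ * Real.exp (2 * π * b * m * k) * Real.exp (-2 * π * b * n * y)) :
    ∃ c₁ c₂ : ℝ, 0 < c₁ ∧ 0 < c₂ ∧
      (∀ k y : ℝ, c₁ * (Real.exp (-c₂ * k) + Real.exp (c₂ * k)
          + Real.exp (-c₂ * y) + Real.exp (c₂ * y)) < Ψ k y) ∧
      (∀ k y : ℝ, 4 * c₁ ≤ Ψ k y) ∧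
      Tendsto (fun p : ℝ × ℝ => Ψ p.1 p.2)
        (Filter.comap (fun p : ℝ × ℝ => |p.1| + |p.2|) atTop) atTop := by
  have hπ : (0:ℝ) < π := Real.pi_pos
  have hab : (0:ℝ) < 2 * π * b := by positivity
  have hm' : (1:ℝ) ≤ (m:ℝ) := by exact_mod_cast hm
  have hn' : (1:ℝ) ≤ (n:ℝ) := by exact_mod_cast hn
  set K := min d₁ (min d₂ d₃) with hKdef
  have hKpos : 0 < K := lt_min hd₁ (lt_min hd₂ hd₃)
  have hK1 : K ≤ d₁ := min_le_left _ _
  have hK2 : K ≤ d₂ := le_trans (min_le_right _ _) (min_le_left _ _)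
  have hK3 : K ≤ d₃ := le_trans (min_le_right _ _) (min_le_right _ _)
  set c₂ := (2 * π * b) / (2 * ((m:ℝ) + n)) with hc₂def
  have hMN : (0:ℝ) < 2 * ((m:ℝ) + n) := by positivity
  have hc₂pos : 0 < c₂ := div_pos hab hMN
  have hmul : c₂ * (2 * ((m:ℝ) + n)) = 2 * π * b := div_mul_cancel₀ _ (ne_of_gt hMN)
  -- cleared-denominator comparisons for c₂
  have hgen : ∀ X Y : ℝ, X ≤ 2 * ((m:ℝ) + n) * Y → c₂ * X ≤ 2 * π * b * Y := by
    intro X Y h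
    calc c₂ * X ≤ c₂ * (2 * ((m:ℝ) + n) * Y) := mul_le_mul_of_nonneg_left h hc₂pos.le
      _ = 2 * π * b * Y := by rw [← hmul]; ring
  have hA : c₂ ≤ 2 * π * b := by
    have := hgen 1 1 (by nlinarith); linarith
  have hB : 2 * (n:ℝ) * c₂ ≤ 2 * π * b * m := by
    have := hgen (2*(n:ℝ)) m (by nlinarith); linarith
  have hC : 2 * c₂ ≤ 2 * π * b * m := by
    have := hgen 2 m (by nlinarith); linarith
  have hD : 2 * (m:ℝ) * c₂ ≤ 2 * π * b * n := by
    have := hgen (2*(m:ℝ)) n (by nlinarith); linarith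
  have hE : 2 * c₂ ≤ 2 * π * b * n := by
    have := hgen 2 n (by nlinarith); linarith
  -- each term of Ψ is a lower bound for Ψ
  have hterm1 : ∀ k y : ℝ, d₁ * Real.exp (-2 * π * b * k) ≤ Ψ k y := by
    intro k y; rw [hΨ]
    have e2 := mul_pos hd₂ (Real.exp_pos (2*π*b*y))
    have e3 := mul_pos (mul_pos hd₃ (Real.exp_pos (2*π*b*m*k))) (Real.exp_pos (-2*π*b*n*y))
    linarith
  have hterm2 : ∀ k y : ℝ, d₂ * Real.exp (2 * π * b * y) ≤ Ψ k y := by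
    intro k y; rw [hΨ]
    have e1 := mul_pos hd₁ (Real.exp_pos (-2*π*b*k))
    have e3 := mul_pos (mul_pos hd₃ (Real.exp_pos (2*π*b*m*k))) (Real.exp_pos (-2*π*b*n*y))
    linarith
  have hterm3 : ∀ k y : ℝ, d₃ * Real.exp (2 * π * b * m * k + -2 * π * b * n * y) ≤ Ψ k y := by
    intro k y; rw [hΨ, Real.exp_add, ← mul_assoc]
    have e1 := mul_pos hd₁ (Real.exp_pos (-2*π*b*k))
    have e2 := mul_pos hd₂ (Real.exp_pos (2*π*b*y))
    linarith
  -- uniform lower bound K ≤ Ψ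
  have hC0 : ∀ k y : ℝ, K ≤ Ψ k y := by
    intro k y
    rcases le_or_gt k 0 with hk | hk
    · refine le_trans ?_ (hterm1 k y)
      have h1 : (1:ℝ) ≤ Real.exp (-2*π*b*k) := by
        rw [← Real.exp_zero]
        exact Real.exp_le_exp.mpr (by linarith [mul_nonneg hab.le (neg_nonneg.mpr hk)])
      exact le_trans hK1 (le_mul_of_one_le_right hd₁.le h1)
    · rcases le_or_gt y 0 with hy | hy
      · refine le_trans ?_ (hterm3 k y)
        have h1 : (1:ℝ) ≤ Real.exp (2*π*b*m*k + -2*π*b*n*y) := by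
          rw [← Real.exp_zero]
          refine Real.exp_le_exp.mpr ?_
          have p1 : (0:ℝ) ≤ 2*π*b*m*k :=
            mul_nonneg (mul_nonneg hab.le (Nat.cast_nonneg m)) hk.le
          have p2 : (0:ℝ) ≤ (2*π*b*(n:ℝ)) * (-y) :=
            mul_nonneg (mul_nonneg hab.le (Nat.cast_nonneg n)) (neg_nonneg.mpr hy)
          linarith
        exact le_trans hK3 (le_mul_of_one_le_right hd₃.le h1)
      · refine le_trans ?_ (hterm2 k y)
        have h1 : (1:ℝ) ≤ Real.exp (2*π*b*y) := by
          rw [← Real.exp_zero]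
          exact Real.exp_le_exp.mpr (by positivity)
        exact le_trans hK2 (le_mul_of_one_le_right hd₂.le h1)
  -- four key bounds
  have key : ∀ k y : ℝ, K * Real.exp (-c₂ * k) ≤ Ψ k y ∧ K * Real.exp (c₂ * k) ≤ Ψ k y
      ∧ K * Real.exp (-c₂ * y) ≤ Ψ k y ∧ K * Real.exp (c₂ * y) ≤ Ψ k y := by
    intro k y
    have hbnd : ∀ t : ℝ, t ≤ 0 → K * Real.exp t ≤ Ψ k y := by
      intro t ht
      have h1 : Real.exp t ≤ 1 := Real.exp_le_one_iff.mpr ht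
      calc K * Real.exp t ≤ K * 1 := mul_le_mul_of_nonneg_left h1 hKpos.le
        _ = K := mul_one K
        _ ≤ Ψ k y := hC0 k y
    refine ⟨?_, ?_, ?_, ?_⟩
    · -- exp(-c₂ k)
      rcases le_or_gt 0 k with hk | hk
      · exact hbnd _ (by linarith [mul_nonneg hc₂pos.le hk])
      · refine le_trans ?_ (hterm1 k y)
        have h1 : Real.exp (-c₂*k) ≤ Real.exp (-2*π*b*k) :=
          Real.exp_le_exp.mpr (by linarith [exq1 hA hk.le])
        exact mul_le_mul hK1 h1 (Real.exp_pos _).le hd₁.le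
    · -- exp(c₂ k)
      rcases le_or_gt k 0 with hk | hk
      · exact hbnd _ (by linarith [mul_nonneg hc₂pos.le (neg_nonneg.mpr hk)])
      · rcases le_or_gt ((m:ℝ)*k) (2*(n:ℝ)*y) with hy | hy
        · refine le_trans ?_ (hterm2 k y)
          have h1 : Real.exp (c₂*k) ≤ Real.exp (2*π*b*y) := by
            refine Real.exp_le_exp.mpr ?_
            linarith [exq2 hn' hab (by linarith : 2*(n:ℝ)*c₂ ≤ (2*π*b)*(m:ℝ))
              hy hk.le]
          exact mul_le_mul hK2 h1 (Real.exp_pos _).le hd₂.le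
        · refine le_trans ?_ (hterm3 k y)
          have h1 : Real.exp (c₂*k) ≤ Real.exp (2*π*b*m*k + -2*π*b*n*y) := by
            refine Real.exp_le_exp.mpr ?_
            linarith [exq3 hab (by linarith : 2*c₂ ≤ (2*π*b)*(m:ℝ)) hy.le hk.le]
          exact mul_le_mul hK3 h1 (Real.exp_pos _).le hd₃.le
    · -- exp(-c₂ y)
      rcases le_or_gt 0 y with hy | hy
      · exact hbnd _ (by linarith [mul_nonneg hc₂pos.le hy])
      · rcases le_or_gt (2*(m:ℝ)*k) ((n:ℝ)*y) with hk | hk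
        · refine le_trans ?_ (hterm1 k y)
          have h1 : Real.exp (-c₂*y) ≤ Real.exp (-2*π*b*k) := by
            refine Real.exp_le_exp.mpr ?_
            linarith [exq4 hm' hab (by linarith : 2*(m:ℝ)*c₂ ≤ (2*π*b)*(n:ℝ))
              hk hy.le]
          exact mul_le_mul hK1 h1 (Real.exp_pos _).le hd₁.le
        · refine le_trans ?_ (hterm3 k y)
          have h1 : Real.exp (-c₂*y) ≤ Real.exp (2*π*b*m*k + -2*π*b*n*y) := by
            refine Real.exp_le_exp.mpr ?_
            linarith [exq5 hab (by linarith : 2*c₂ ≤ (2*π*b)*(n:ℝ)) hk.le hy.le]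
          exact mul_le_mul hK3 h1 (Real.exp_pos _).le hd₃.le
    · -- exp(c₂ y)
      rcases le_or_gt y 0 with hy | hy
      · exact hbnd _ (by linarith [mul_nonneg hc₂pos.le (neg_nonneg.mpr hy)])
      · refine le_trans ?_ (hterm2 k y)
        have h1 : Real.exp (c₂*y) ≤ Real.exp (2*π*b*y) := by
          refine Real.exp_le_exp.mpr ?_
          nlinarith [mul_nonneg (sub_nonneg.mpr hA) hy.le]
        exact mul_le_mul hK2 h1 (Real.exp_pos _).le hd₂.le
  -- main strict inequality
  have main : ∀ k y : ℝ, K/8 * (Real.exp (-c₂ * k) + Real.exp (c₂ * k)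
      + Real.exp (-c₂ * y) + Real.exp (c₂ * y)) < Ψ k y := by
    intro k y
    obtain ⟨B1, B2, B3, B4⟩ := key k y
    have hs : 0 < Real.exp (-c₂ * k) + Real.exp (c₂ * k)
        + Real.exp (-c₂ * y) + Real.exp (c₂ * y) := by positivity
    have hp := mul_pos hKpos hs
    linarith
  refine ⟨K/8, c₂, by positivity, hc₂pos, main, ?_, ?_⟩
  · -- Ψ ≥ 4c₁
    intro k y
    have h := main k y
    have h1 : (2:ℝ) ≤ Real.exp (-c₂ * k) + Real.exp (c₂ * k) := by
      linarith [Real.add_one_le_exp (c₂*k), Real.add_one_le_exp (-c₂*k)]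
    have h2 : (2:ℝ) ≤ Real.exp (-c₂ * y) + Real.exp (c₂ * y) := by
      linarith [Real.add_one_le_exp (c₂*y), Real.add_one_le_exp (-c₂*y)]
    have h3 : 0 ≤ K/8 * ((Real.exp (-c₂ * k) + Real.exp (c₂ * k)
        + Real.exp (-c₂ * y) + Real.exp (c₂ * y)) - 4) :=
      mul_nonneg (by positivity) (by linarith)
    linarith
  · -- tendsto atTop
    have hgrow : ∀ k y : ℝ, K/8 * Real.exp (c₂/2 * (|k| + |y|)) ≤ Ψ k y := by
      intro k y
      have h := (main k y).le
      have habs : ∀ t : ℝ, Real.exp (c₂ * |t|) ≤ Real.exp (-c₂ * t) + Real.exp (c₂ * t) := by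
        intro t
        rcases abs_cases t with ⟨h1, _⟩ | ⟨h1, _⟩
        · rw [h1]; linarith [Real.exp_pos (-c₂*t)]
        · rw [h1]
          have he : c₂ * -t = -c₂ * t := by ring
          rw [he]; linarith [Real.exp_pos (c₂*t)]
      have h3 : Real.exp (c₂/2 * (|k| + |y|)) ≤ Real.exp (c₂ * |k|) + Real.exp (c₂ * |y|) := by
        rcases le_total |k| |y| with hky | hky
        · have h4 : Real.exp (c₂/2 * (|k| + |y|)) ≤ Real.exp (c₂ * |y|) :=
            Real.exp_le_exp.mpr (by nlinarith)
          linarith [Real.exp_pos (c₂ * |k|)]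
        · have h4 : Real.exp (c₂/2 * (|k| + |y|)) ≤ Real.exp (c₂ * |k|) :=
            Real.exp_le_exp.mpr (by nlinarith)
          linarith [Real.exp_pos (c₂ * |y|)]
      have h4 := habs k
      have h5 := habs y
      have h6 : Real.exp (c₂/2 * (|k| + |y|)) ≤ Real.exp (-c₂ * k) + Real.exp (c₂ * k)
          + Real.exp (-c₂ * y) + Real.exp (c₂ * y) := by linarith
      calc K/8 * Real.exp (c₂/2 * (|k| + |y|))
          ≤ K/8 * (Real.exp (-c₂ * k) + Real.exp (c₂ * k)
            + Real.exp (-c₂ * y) + Real.exp (c₂ * y)) :=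
            mul_le_mul_of_nonneg_left h6 (by positivity)
        _ ≤ Ψ k y := h
    have t1 : Tendsto (fun t : ℝ => K/8 * Real.exp (c₂/2 * t)) atTop atTop := by
      apply Tendsto.const_mul_atTop (by positivity : (0:ℝ) < K/8)
      exact Real.tendsto_exp_atTop.comp (Tendsto.const_mul_atTop (by positivity) tendsto_id)
    have t2 : Tendsto (fun p : ℝ × ℝ => |p.1| + |p.2|)
        (Filter.comap (fun p : ℝ × ℝ => |p.1| + |p.2|) atTop) atTop := tendsto_comap
    exact tendsto_atTop_mono (fun p => hgrow p.1 p.2) (t1.comp t2)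
end

section
/- Let b > 0 and m, n positive integers, and set c_{m,n} = (m+n+1)²/(2mn). Then ∫_ℝ ∫_ℝ (λ − e^{−2πbk} − e^{2πby} − e^{2πb(mk−ny)})₊ dk dy = (c_{m,n}/(2πb)²)·λ(log λ)² + O(λ log λ) as λ → ∞. -/
/-!
After the substitution `u = 2πbk`, `v = 2πby`, which costs a factor `(2πb)⁻²`, and with
`L = log λ`, the integrand vanishes outside the triangle `-L ≤ u`, `v ≤ L`, `mu - nv ≤ L`, whose
area is `c_{m,n} L²`, and it is at most `λ` on it: this is the upper bound. On the triangle the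
integrand is at least `λ - e^{-u} - e^{v} - e^{mu - nv}`, and each exponential integrates over the
triangle to at most `λ` times the length of a side, so the lower bound loses only
`O(λ L)`; in total exactly `2 c_{m,n} λ L`.
-/

open Real MeasureTheory Set

theorem integral_integral_comp_mul_mul (β : ℝ) (F : ℝ → ℝ → ℝ) :
    ∫ x, ∫ y, F (β * x) (β * y) = (β ^ 2)⁻¹ * ∫ x, ∫ y, F x y := by
  simp_rw [Measure.integral_comp_mul_left (F _), smul_eq_mul, MeasureTheory.integral_const_mul,
    Measure.integral_comp_mul_left (fun x => ∫ y, F x y), smul_eq_mul, ← mul_assoc, ← abs_mul,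
    ← mul_inv, ← sq, abs_of_nonneg (inv_nonneg.2 (sq_nonneg β))]

theorem integral_mem_Icc_of_eq_zero_off_Icc {G lo hi : ℝ → ℝ} {a b : ℝ} (hab : a ≤ b)
    (hG : ∀ x ∉ Icc a b, G x = 0) (hGm : AEStronglyMeasurable G)
    (hlo : IntervalIntegrable lo volume a b) (hhi : IntervalIntegrable hi volume a b)
    (hbounds : ∀ x ∈ Icc a b, G x ∈ Icc (lo x) (hi x)) :
    ∫ x, G x ∈ Icc (∫ x in a..b, lo x) (∫ x in a..b, hi x) := by
  have hGint : IntervalIntegrable G volume a b := by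
    rw [intervalIntegrable_iff_integrableOn_Ioc_of_le hab] at hlo hhi ⊢
    refine (hlo.abs.add hhi.abs).mono' hGm.restrict ?_
    filter_upwards [ae_restrict_mem measurableSet_Ioc] with x hx
    obtain ⟨hxlo, hxhi⟩ := hbounds x (Ioc_subset_Icc_self hx)
    rw [Pi.add_apply, Real.norm_eq_abs, abs_le]
    constructor <;> linarith [neg_abs_le (lo x), le_abs_self (hi x), abs_nonneg (lo x),
      abs_nonneg (hi x)]
  rw [← setIntegral_eq_integral_of_forall_compl_eq_zero hG, integral_Icc_eq_integral_Ioc,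
    ← intervalIntegral.integral_of_le hab]
  exact ⟨intervalIntegral.integral_mono_on hab hlo hGint fun x hx => (hbounds x hx).1,
    intervalIntegral.integral_mono_on hab hGint hhi fun x hx => (hbounds x hx).2⟩

theorem integral_exp_le_exp (a b : ℝ) : ∫ x in a..b, exp x ≤ exp b := by
  rw [integral_exp]
  linarith [exp_pos a]

/-- `λ` minus the symbol `e^{-u} + e^{v} + e^{Mu - Nv}` of `H_{m,n}`, in the coordinates
`u = 2πbk`, `v = 2πby`. -/
noncomputable def symbolGap (M N lam u v : ℝ) : ℝ :=
  lam - exp (-u) - exp v - exp (M * u - N * v)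

/-- The length of the vertical section at `u` of the triangle `-L ≤ u`, `v ≤ L`, `Mu - Nv ≤ L`,
outside which `symbolGap M N (exp L)` is nonpositive. -/
noncomputable def triangleWidth (M N L u : ℝ) : ℝ :=
  L - (M * u - L) / N

@[fun_prop]
theorem continuous_triangleWidth (M N L : ℝ) : Continuous (triangleWidth M N L) := by
  unfold triangleWidth
  fun_prop

theorem integral_triangleWidth {M N : ℝ} (hM : 0 < M) (hN : 0 < N) (L : ℝ) :
    ∫ u in -L..(N + 1) * L / M, triangleWidth M N L u = (M + N + 1) ^ 2 / (2 * M * N) * L ^ 2 := by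
  unfold triangleWidth
  rw [intervalIntegral.integral_sub, intervalIntegral.integral_div, intervalIntegral.integral_sub,
    intervalIntegral.integral_const_mul, integral_id, intervalIntegral.integral_const]
  · simp only [smul_eq_mul]
    field_simp
    ring
  all_goals first
    | exact intervalIntegrable_const
    | exact Continuous.intervalIntegrable (by fun_prop) _ _

theorem symbolGap_le (M N lam u v : ℝ) : symbolGap M N lam u v ≤ lam := by
  unfold symbolGap
  linarith [exp_pos (-u), exp_pos v, exp_pos (M * u - N * v)]

theorem aestronglyMeasurable_integral_max_symbolGap (M N lam : ℝ) :
    AEStronglyMeasurable fun u => ∫ v, max (symbolGap M N lam u v) 0 :=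
  (Continuous.stronglyMeasurable (by unfold symbolGap; fun_prop :
    Continuous fun p : ℝ × ℝ => max (symbolGap M N lam p.1 p.2) 0)).integral_prod_right'
    |>.aestronglyMeasurable

section symbolGap

variable {M N L u v : ℝ}

theorem symbolGap_nonpos (h : L ≤ -u ∨ L ≤ v ∨ L ≤ M * u - N * v) :
    symbolGap M N (exp L) u v ≤ 0 := by
  unfold symbolGap
  have := exp_pos (-u)
  have := exp_pos v
  have := exp_pos (M * u - N * v)
  rcases h with h | h | h <;> linarith [exp_le_exp.2 h]

theorem max_symbolGap_eq_zero_of_notMem (hN : 0 < N) (hv : v ∉ Icc ((M * u - L) / N) L) :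
    max (symbolGap M N (exp L) u v) 0 = 0 := by
  refine max_eq_right (symbolGap_nonpos ?_)
  rw [mem_Icc, not_and_or, not_le, not_le, lt_div_iff₀ hN] at hv
  rcases hv with h | h
  · exact Or.inr (Or.inr (by linarith))
  · exact Or.inr (Or.inl h.le)

theorem symbolGap_nonpos_of_notMem (hM : 0 < M) (hN : 0 < N)
    (hu : u ∉ Icc (-L) ((N + 1) * L / M)) (v : ℝ) : symbolGap M N (exp L) u v ≤ 0 := by
  apply symbolGap_nonpos
  rw [mem_Icc, not_and_or, not_le, not_le, div_lt_iff₀ hM] at hu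
  rcases hu with h | h
  · exact Or.inl (by linarith)
  · rcases le_or_gt L v with hv | hv
    · exact Or.inr (Or.inl hv)
    · exact Or.inr (Or.inr (by nlinarith))

theorem integral_symbolGap_ge (hN : 0 < N) :
    (exp L - exp (-u)) * triangleWidth M N L u - exp L * (1 + 1 / N)
      ≤ ∫ v in (M * u - L) / N..L, symbolGap M N (exp L) u v := by
  have hcorner : M * u - N * ((M * u - L) / N) = L := by field_simp; ring
  have hexp₁ := integral_exp_le_exp ((M * u - L) / N) L
  have hexp₂ : ∫ v in (M * u - L) / N..L, exp (M * u - N * v) ≤ exp L / N := by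
    rw [intervalIntegral.integral_comp_sub_mul _ hN.ne', smul_eq_mul, inv_mul_eq_div]
    gcongr
    calc _ ≤ exp (M * u - N * ((M * u - L) / N)) := integral_exp_le_exp _ _
      _ = exp L := by rw [hcorner]
  unfold symbolGap triangleWidth
  rw [intervalIntegral.integral_sub, intervalIntegral.integral_sub, intervalIntegral.integral_const,
    smul_eq_mul]
  · have : exp L * (1 + 1 / N) = exp L + exp L / N := by ring
    linarith
  all_goals first
    | exact intervalIntegrable_const
    | exact Continuous.intervalIntegrable (by fun_prop) _ _

theorem integral_max_symbolGap_mem_Icc (hN : 0 < N) (hu : (M * u - L) / N ≤ L) :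
    ∫ v, max (symbolGap M N (exp L) u v) 0
      ∈ Icc ((exp L - exp (-u)) * triangleWidth M N L u - exp L * (1 + 1 / N))
        (exp L * triangleWidth M N L u) := by
  have hcont : Continuous (symbolGap M N (exp L) u) := by unfold symbolGap; fun_prop
  obtain ⟨hlo, hhi⟩ := integral_mem_Icc_of_eq_zero_off_Icc hu
    (fun v hv => max_symbolGap_eq_zero_of_notMem hN hv)
    (hcont.max continuous_const).aestronglyMeasurable (hcont.intervalIntegrable _ _)
    intervalIntegrable_const
    fun v _ => ⟨le_max_left _ _, max_le (symbolGap_le M N _ u v) (exp_pos L).le⟩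
  rw [intervalIntegral.integral_const, smul_eq_mul] at hhi
  exact ⟨(integral_symbolGap_ge hN).trans hlo, hhi.trans_eq (mul_comm _ _)⟩

theorem integral_max_symbolGap_mem_Icc_of_mem (hM : 0 < M) (hN : 0 < N)
    (hu : u ∈ Icc (-L) ((N + 1) * L / M)) :
    ∫ v, max (symbolGap M N (exp L) u v) 0
      ∈ Icc (exp L * triangleWidth M N L u - triangleWidth M N L (-L) * exp (-u)
          - exp L * (1 + 1 / N)) (exp L * triangleWidth M N L u) := by
  have hwidth : triangleWidth M N L u ≤ triangleWidth M N L (-L) := by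
    unfold triangleWidth
    gcongr
    exact hu.1
  have hsection : (M * u - L) / N ≤ L := by
    rw [div_le_iff₀ hN]
    linarith [(le_div_iff₀ hM).1 hu.2]
  obtain ⟨hlo, hhi⟩ := integral_max_symbolGap_mem_Icc hN hsection
  refine ⟨le_trans ?_ hlo, hhi⟩
  nlinarith [exp_pos (-u)]

end symbolGap

theorem abs_integral_integral_max_symbolGap_sub_le {M N L : ℝ} (hM : 0 < M) (hN : 0 < N)
    (hL : 0 ≤ L) :
    |(∫ u, ∫ v, max (symbolGap M N (exp L) u v) 0)
        - (M + N + 1) ^ 2 / (2 * M * N) * exp L * L ^ 2|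
      ≤ 2 * ((M + N + 1) ^ 2 / (2 * M * N)) * exp L * L := by
  have hbase : -L ≤ (N + 1) * L / M := by
    have : 0 ≤ (N + 1) * L / M := by positivity
    linarith
  obtain ⟨hlo, hhi⟩ := integral_mem_Icc_of_eq_zero_off_Icc hbase
    (fun u hu => by simp [max_eq_right (symbolGap_nonpos_of_notMem hM hN hu _)])
    (aestronglyMeasurable_integral_max_symbolGap M N _)
    (Continuous.intervalIntegrable (by fun_prop) _ _)
    (Continuous.intervalIntegrable (by fun_prop) _ _)
    fun u hu => integral_max_symbolGap_mem_Icc_of_mem hM hN hu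
  have hexp : ∫ u in -L..(N + 1) * L / M, exp (-u) ≤ exp L := by
    rw [intervalIntegral.integral_comp_neg, neg_neg]
    exact integral_exp_le_exp _ _
  have hlo_eq : ∫ u in -L..(N + 1) * L / M, (exp L * triangleWidth M N L u
        - triangleWidth M N L (-L) * exp (-u) - exp L * (1 + 1 / N))
      = exp L * ((M + N + 1) ^ 2 / (2 * M * N) * L ^ 2)
        - triangleWidth M N L (-L) * (∫ u in -L..(N + 1) * L / M, exp (-u))
        - ((N + 1) * L / M - -L) * (exp L * (1 + 1 / N)) := by
    rw [intervalIntegral.integral_sub, intervalIntegral.integral_sub,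
      intervalIntegral.integral_const_mul, intervalIntegral.integral_const_mul,
      integral_triangleWidth hM hN, intervalIntegral.integral_const, smul_eq_mul]
    all_goals apply Continuous.intervalIntegrable; fun_prop
  rw [hlo_eq] at hlo
  rw [intervalIntegral.integral_const_mul, integral_triangleWidth hM hN] at hhi
  have hside : triangleWidth M N L (-L) = (M + N + 1) * L / N := by
    unfold triangleWidth
    field_simp
    ring
  have herror : triangleWidth M N L (-L) * exp L + ((N + 1) * L / M - -L) * (exp L * (1 + 1 / N))
      = 2 * ((M + N + 1) ^ 2 / (2 * M * N)) * exp L * L := by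
    rw [hside]
    field_simp
    ring
  have hside₀ : 0 ≤ triangleWidth M N L (-L) := by
    rw [hside]
    positivity
  have hexp' := mul_le_mul_of_nonneg_left hexp hside₀
  have hpos : 0 ≤ 2 * ((M + N + 1) ^ 2 / (2 * M * N)) * exp L * L := by positivity
  rw [abs_le]
  constructor
  · linear_combination hlo + hexp' + herror
  · linear_combination hhi + hpos

theorem Hmn_phase_space_asymptotics (b : ℝ) (hb : 0 < b) (m n : ℕ) (hm : 0 < m) (hn : 0 < n) :
    ∃ C Λ : ℝ, 0 < C ∧ 0 < Λ ∧ ∀ lam : ℝ, Λ ≤ lam →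
      |(∫ k : ℝ, ∫ y : ℝ,
          max (lam - Real.exp (-2 * π * b * k) - Real.exp (2 * π * b * y)
            - Real.exp (2 * π * b * (m * k - n * y))) 0)
        - ((m + n + 1)^2 / (2 * m * n) / (2 * π * b)^2) * lam * (Real.log lam)^2|
      ≤ C * lam * Real.log lam := by
  set β := 2 * π * b
  set c : ℝ := (m + n + 1) ^ 2 / (2 * m * n)
  have hβ : 0 < β := by positivity
  refine ⟨2 * c / β ^ 2, 1, by positivity, one_pos, fun lam hlam => ?_⟩
  have hlam₀ : 0 < lam := one_pos.trans_le hlam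
  have hscale : (∫ k : ℝ, ∫ y : ℝ, max (lam - exp (-2 * π * b * k) - exp (2 * π * b * y)
        - exp (2 * π * b * (m * k - n * y))) 0)
      = (β ^ 2)⁻¹ * ∫ u, ∫ v, max (symbolGap m n lam u v) 0 := by
    rw [← integral_integral_comp_mul_mul]
    congr 1 with k
    congr 1 with y
    simp only [symbolGap, β]
    ring_nf
  have hestimate := abs_integral_integral_max_symbolGap_sub_le (M := m) (N := n)
    (by positivity) (by positivity) (log_nonneg hlam)
  rw [exp_log hlam₀] at hestimate
  rw [hscale, show c / β ^ 2 * lam * log lam ^ 2 = (β ^ 2)⁻¹ * (c * lam * log lam ^ 2) by ring,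
    ← mul_sub, abs_mul, abs_of_pos (by positivity)]
  calc (β ^ 2)⁻¹ * |_| ≤ (β ^ 2)⁻¹ * (2 * c * lam * log lam) := by gcongr
    _ = 2 * c / β ^ 2 * lam * log lam := by ring
end
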